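/- arXiv:math-ph/0411042 — 4 statements merged into one kernel-verified Lean document; each statement's English description precedes it below -/
import Mathlib

section
/- Let H_0 be a non-negative self-adjoint operator on a Hilbert space with 0 a simple eigenvalue with eigenvector Ω and H_0 ≥ 1 on the orthogonal complement of Ω. Let Φ be a symmetric perturbation satisfying the relative bound ‖Φ v‖ ≤ δ ‖H_0 v‖ for all v in the domain of H_0, with δ < 1. Then for every z ∈ ℂ lying outside the union over a ∈ Spec(H_0) of the disks {w : |w − a| ≤ δ a}, the operator H_0 + Φ − z is boundedly invertible, with inverse given by the convergent Neumann series (H_0 − z)^{-1} Σ_{k≥0} (−1)^k (Φ (H_0 − z)^{-1})^k. Consequently Spec(H_0 + Φ) ⊆ ∪_{a ∈ Spec(H_0)} {w : |w − a| ≤ δ a}. -/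
open scoped InnerProductSpace

lemma ring_inverse_mul_rev {A : Type*} [MonoidWithZero A]
    {a b : A} (ha : IsUnit a) (hb : IsUnit b) :
    Ring.inverse (a * b) = Ring.inverse b * Ring.inverse a := by
  obtain ⟨u, rfl⟩ := ha
  obtain ⟨v, rfl⟩ := hb
  rw [← Units.val_mul, Ring.inverse_unit, Ring.inverse_unit, Ring.inverse_unit,
    mul_inv_rev, Units.val_mul]

/-- relative-bound perturbation of a non-negative self-adjoint
operator with a simple gapped ground state.  For `z` outside the union of disks
`{w : |w - a| ≤ δ a}`, `a ∈ Spec(H₀)`, the operator `H₀ + Φ - z` is invertible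
with inverse given by the Neumann series
`(H₀ - z)⁻¹ Σ (-1)^k (Φ (H₀ - z)⁻¹)^k`, and consequently
`Spec(H₀ + Φ) ⊆ ∪_{a ∈ Spec H₀} {w : |w - a| ≤ δ a}`. -/
theorem stmt2
    {H : Type*} [NormedAddCommGroup H] [InnerProductSpace ℂ H] [CompleteSpace H]
    (H0 Φ : H →L[ℂ] H) (hsa : IsSelfAdjoint H0) (hΦsa : IsSelfAdjoint Φ)
    (hpos : ∀ v : H, 0 ≤ (⟪v, H0 v⟫_ℂ).re)
    (Ω : H) (hΩ : ‖Ω‖ = 1) (hgs : H0 Ω = 0)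
    (hsimple : ∀ v : H, H0 v = 0 → ∃ c : ℂ, v = c • Ω)
    (hgap : ∀ v : H, ⟪Ω, v⟫_ℂ = 0 → ‖v‖ ≤ ‖H0 v‖)
    (δ : ℝ) (hδ0 : 0 < δ) (hδ1 : δ < 1)
    (hrel : ∀ v : H, ‖Φ v‖ ≤ δ * ‖H0 v‖) :
    (∀ z : ℂ, z ∉ (⋃ a ∈ spectrum ℂ H0, {w : ℂ | ‖w - a‖ ≤ δ * ‖a‖}) →
      IsUnit (H0 + Φ - algebraMap ℂ (H →L[ℂ] H) z) ∧
      Ring.inverse (H0 + Φ - algebraMap ℂ (H →L[ℂ] H) z) =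
        Ring.inverse (H0 - algebraMap ℂ (H →L[ℂ] H) z) *
          ∑' k : ℕ, ((-1 : ℂ) ^ k) •
            (Φ * Ring.inverse (H0 - algebraMap ℂ (H →L[ℂ] H) z)) ^ k) ∧
    spectrum ℂ (H0 + Φ) ⊆ ⋃ a ∈ spectrum ℂ H0, {w : ℂ | ‖w - a‖ ≤ δ * ‖a‖} := by
  haveI := hsa.isStarNormal
  haveI : Nontrivial H := ⟨Ω, 0, fun h => by rw [h, norm_zero] at hΩ; exact zero_ne_one hΩ⟩
  have key : ∀ z : ℂ, z ∉ (⋃ a ∈ spectrum ℂ H0, {w : ℂ | ‖w - a‖ ≤ δ * ‖a‖}) →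
      IsUnit (H0 + Φ - algebraMap ℂ (H →L[ℂ] H) z) ∧
      Ring.inverse (H0 + Φ - algebraMap ℂ (H →L[ℂ] H) z) =
        Ring.inverse (H0 - algebraMap ℂ (H →L[ℂ] H) z) *
          ∑' k : ℕ, ((-1 : ℂ) ^ k) •
            (Φ * Ring.inverse (H0 - algebraMap ℂ (H →L[ℂ] H) z)) ^ k := by
    intro z hz
    simp only [Set.mem_iUnion, Set.mem_setOf_eq, not_exists, not_le] at hz
    -- `z` is not in the spectrum of `H0`
    have hzspec : z ∉ spectrum ℂ H0 := fun hmem => by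
      have h := hz z hmem
      rw [sub_self, norm_zero] at h
      exact absurd h (not_lt.2 (by positivity))
    have hUz : IsUnit (H0 - algebraMap ℂ (H →L[ℂ] H) z) := by
      rw [← neg_sub]
      exact (spectrum.notMem_iff.mp hzspec).neg
    set R := Ring.inverse (H0 - algebraMap ℂ (H →L[ℂ] H) z) with hRdef
    -- the function x ↦ x (x - z)⁻¹ and its continuity on the spectrum
    set g : ℂ → ℂ := fun x => x * (x - z)⁻¹ with hgdef
    have hne : ∀ x ∈ spectrum ℂ H0, x - z ≠ 0 := fun x hx h =>
      hzspec (sub_eq_zero.mp h ▸ hx)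
    have hg : ContinuousOn g (spectrum ℂ H0) :=
      continuousOn_id.mul ((continuousOn_id.sub continuousOn_const).inv₀ hne)
    have hgc : ContinuousOn (fun x : ℂ => (x - z)⁻¹) (spectrum ℂ H0) :=
      (continuousOn_id.sub continuousOn_const).inv₀ hne
    -- identify `cfc g H0` with `H0 * R`
    have hsub : H0 - algebraMap ℂ (H →L[ℂ] H) z = cfc (fun x : ℂ => x - z) H0 := by
      rw [cfc_sub (fun x : ℂ => x) (fun _ : ℂ => z) H0 continuousOn_id continuousOn_const,
        cfc_id' ℂ H0, cfc_const z H0]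
    have hmul : cfc g H0 * (H0 - algebraMap ℂ (H →L[ℂ] H) z) = H0 := by
      rw [hsub, ← cfc_mul g (fun x : ℂ => x - z) H0 hg
        (continuousOn_id.sub continuousOn_const)]
      rw [show (fun x : ℂ => g x * (x - z)) = fun x => x * ((x - z)⁻¹ * (x - z)) by
        funext x; rw [hgdef]; ring]
      rw [cfc_congr (g := fun x : ℂ => x) (fun x hx => by
        rw [inv_mul_cancel₀ (hne x hx), mul_one]), cfc_id' ℂ H0]
    have hR : cfc g H0 = H0 * R := by
      have h2 := congrArg (· * R) hmul
      simpa only [hRdef, mul_assoc, Ring.mul_inverse_cancel _ hUz, mul_one] using h2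
    -- norm estimate via the spectral radius
    haveI hnormal : IsStarNormal (cfc g H0) := cfc_predicate g H0
    set r : NNReal := ⟨δ⁻¹, (inv_pos.2 hδ0).le⟩ with hrdef
    have hlt : spectralRadius ℂ (cfc g H0) < r := by
      apply spectrum.spectralRadius_lt_of_forall_lt
      intro w hw
      rw [cfc_map_spectrum g H0] at hw
      obtain ⟨a, ha, rfl⟩ := hw
      have hb : (0:ℝ) < ‖z - a‖ := lt_of_le_of_lt (by positivity) (hz a ha)
      rw [← NNReal.coe_lt_coe, coe_nnnorm]
      show ‖a * (a - z)⁻¹‖ < (r : ℝ)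
      have hr' : (r : ℝ) = δ⁻¹ := rfl
      rw [hr', norm_mul, norm_inv, norm_sub_rev a z]
      have h2 := mul_lt_mul_of_pos_left (hz a ha) (inv_pos.2 hδ0)
      rw [← mul_assoc, inv_mul_cancel₀ hδ0.ne', one_mul] at h2
      calc ‖a‖ * ‖z - a‖⁻¹ < (δ⁻¹ * ‖z - a‖) * ‖z - a‖⁻¹ := by
            exact mul_lt_mul_of_pos_right h2 (inv_pos.2 hb)
        _ = δ⁻¹ := by rw [mul_assoc, mul_inv_cancel₀ hb.ne', mul_one]
    have hnorm1 : ‖H0 * R‖ < δ⁻¹ := by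
      have := (IsStarNormal.spectralRadius_eq_nnnorm (cfc g H0)) ▸ hlt
      rw [ENNReal.coe_lt_coe, ← NNReal.coe_lt_coe, coe_nnnorm] at this
      rwa [hR] at this
    -- the Neumann series perturbation
    set T := Φ * R with hTdef
    have hTnorm : ‖T‖ < 1 := by
      have hle : ‖T‖ ≤ δ * ‖H0 * R‖ := by
        apply ContinuousLinearMap.opNorm_le_bound _ (by positivity)
        intro u
        rw [hTdef, ContinuousLinearMap.mul_apply]
        calc ‖Φ (R u)‖ ≤ δ * ‖H0 (R u)‖ := hrel _
          _ = δ * ‖(H0 * R) u‖ := by rw [ContinuousLinearMap.mul_apply]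
          _ ≤ δ * (‖H0 * R‖ * ‖u‖) := by
              exact mul_le_mul_of_nonneg_left ((H0 * R).le_opNorm u) hδ0.le
          _ = δ * ‖H0 * R‖ * ‖u‖ := by ring
      calc ‖T‖ ≤ δ * ‖H0 * R‖ := hle
        _ < δ * δ⁻¹ := mul_lt_mul_of_pos_left hnorm1 hδ0
        _ = 1 := mul_inv_cancel₀ hδ0.ne'
    have hTnorm' : ‖-T‖ < 1 := by rwa [norm_neg]
    have h1T : IsUnit (1 + T) := by
      rw [show (1 + T) = 1 - (-T) by rw [sub_neg_eq_add]]
      exact isUnit_one_sub_of_norm_lt_one hTnorm'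
    -- factorization
    have hfac : (1 + T) * (H0 - algebraMap ℂ (H →L[ℂ] H) z)
        = H0 + Φ - algebraMap ℂ (H →L[ℂ] H) z := by
      have hT1 : T * (H0 - algebraMap ℂ (H →L[ℂ] H) z) = Φ := by
        rw [hTdef, mul_assoc, hRdef, Ring.inverse_mul_cancel _ hUz, mul_one]
      rw [add_mul, one_mul, hT1]
      abel
    have hUnit : IsUnit (H0 + Φ - algebraMap ℂ (H →L[ℂ] H) z) :=
      hfac ▸ h1T.mul hUz
    refine ⟨hUnit, ?_⟩
    rw [← hfac, ring_inverse_mul_rev h1T hUz, ← hRdef]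
    congr 1
    rw [show (1 + T) = 1 - (-T) by rw [sub_neg_eq_add],
      ← geom_series_eq_inverse (-T) hTnorm']
    exact tsum_congr fun n => by rw [← neg_one_smul ℂ T, smul_pow]
  refine ⟨key, ?_⟩
  intro w hw
  by_contra hnot
  have hu := (key w hnot).1
  have : w ∉ spectrum ℂ (H0 + Φ) :=
    spectrum.notMem_iff.mpr (by rw [← neg_sub]; exact hu.neg)
  exact this hw
end

section
/- If a positive invertible operator G on ℓ²(ℤ^ν) satisfies the off-diagonal decay |G_{xy} − δ_{xy}| ≤ ε^{|x−y|+1} with ε small enough that ‖G − I‖ ≤ 1/2 (Schur bound), then G^{-1/2} also has exponential off-diagonal decay: there exist constants C and γ ∈ (0,1), depending only on ε and ν, such that |(G^{-1/2})_{xy} − δ_{xy}| ≤ C γ^{|x−y|}. -/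
open scoped InnerProductSpace

def latD {ν : ℕ} (x y : Fin ν → ℤ) : ℕ := ∑ i, (x i - y i).natAbs


/-- coefficients of the binomial series `(1+t)^{-1/2}` -/
noncomputable def sqCoef : ℕ → ℝ
  | 0 => 1
  | (k+1) => sqCoef k * (-(1/2) - k) / (k+1)

lemma sqCoef_succ (k : ℕ) : (k+1 : ℝ) * sqCoef (k+1) = (-(1/2) - k) * sqCoef k := by
  have : (k+1 : ℝ) ≠ 0 := by positivity
  rw [sqCoef, mul_comm, div_mul_cancel₀ _ this]
  ring

lemma abs_sqCoef_le_one (k : ℕ) : |sqCoef k| ≤ 1 := by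
  induction k with
  | zero => simp [sqCoef]
  | succ k ih =>
    have h1 : (0:ℝ) < k+1 := by positivity
    have : |sqCoef (k+1)| = |sqCoef k| * (|(-(1/2) - (k:ℝ))| / (k+1)) := by
      rw [sqCoef, abs_div, abs_mul, abs_of_pos h1]
      ring
    rw [this]
    have h2 : |(-(1/2) - (k:ℝ))| / (k+1) ≤ 1 := by
      rw [div_le_one h1, abs_le]
      constructor <;> linarith [Nat.cast_nonneg (α := ℝ) k]
    calc |sqCoef k| * (|(-(1/2) - (k:ℝ))| / (k+1)) ≤ 1 * 1 :=
          mul_le_mul ih h2 (by positivity) zero_le_one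
      _ = 1 := by ring

/-- auxiliary symmetrization -/
lemma sqCoef_sym_sum (n : ℕ) :
    2 * ∑ j ∈ Finset.range (n+1), (j:ℝ) * sqCoef j * sqCoef (n - j)
      = n * ∑ j ∈ Finset.range (n+1), sqCoef j * sqCoef (n - j) := by
  have hrefl := Finset.sum_range_reflect (fun j => (j:ℝ) * sqCoef j * sqCoef (n - j)) (n+1)
  -- hrefl : ∑ j in range (n+1), f (n+1-1-j) = ∑ j in range (n+1), f j
  have h1 : ∑ j ∈ Finset.range (n+1), ((n - j : ℕ):ℝ) * sqCoef (n-j) * sqCoef j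
      = ∑ j ∈ Finset.range (n+1), (j:ℝ) * sqCoef j * sqCoef (n - j) := by
    have := hrefl
    simp only [Nat.add_sub_cancel] at this
    rw [← this]
    refine Finset.sum_congr rfl fun j hj => ?_
    have hjn : j ≤ n := Nat.lt_succ_iff.mp (Finset.mem_range.mp hj)
    rw [Nat.sub_sub_self hjn]
  have h2 : ∀ j ∈ Finset.range (n+1),
      ((j:ℝ) + ((n - j:ℕ):ℝ)) * (sqCoef j * sqCoef (n - j))
        = (n:ℝ) * (sqCoef j * sqCoef (n - j)) := by
    intro j hj
    have hjn : j ≤ n := Nat.lt_succ_iff.mp (Finset.mem_range.mp hj)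
    congr 1
    push_cast [Nat.cast_sub hjn]
    ring
  calc 2 * ∑ j ∈ Finset.range (n+1), (j:ℝ) * sqCoef j * sqCoef (n - j)
      = ∑ j ∈ Finset.range (n+1), (j:ℝ) * sqCoef j * sqCoef (n - j)
        + ∑ j ∈ Finset.range (n+1), ((n - j:ℕ):ℝ) * sqCoef (n-j) * sqCoef j := by
        rw [h1]; ring
    _ = ∑ j ∈ Finset.range (n+1), ((j:ℝ) + ((n - j:ℕ):ℝ)) * (sqCoef j * sqCoef (n - j)) := by
        rw [← Finset.sum_add_distrib]
        refine Finset.sum_congr rfl fun j hj => ?_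
        ring
    _ = ∑ j ∈ Finset.range (n+1), (n:ℝ) * (sqCoef j * sqCoef (n - j)) :=
        Finset.sum_congr rfl h2
    _ = n * ∑ j ∈ Finset.range (n+1), sqCoef j * sqCoef (n - j) := by
        rw [Finset.mul_sum]

lemma sqCoef_conv (n : ℕ) :
    ∑ j ∈ Finset.range (n+1), sqCoef j * sqCoef (n - j) = (-1:ℝ)^n := by
  induction n with
  | zero => simp [sqCoef]
  | succ n ih =>
    have key : ((n:ℝ)+1) * ∑ j ∈ Finset.range (n+2), sqCoef j * sqCoef (n+1-j)
        = -(((n:ℝ)+1) * ∑ j ∈ Finset.range (n+1), sqCoef j * sqCoef (n - j)) := by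
      have e1 : ((n:ℝ)+1) * ∑ j ∈ Finset.range (n+2), sqCoef j * sqCoef (n+1-j)
          = 2 * ∑ j ∈ Finset.range (n+2), (j:ℝ) * sqCoef j * sqCoef (n+1-j) := by
        rw [sqCoef_sym_sum (n+1)]
        push_cast
        ring
      have e2 : ∑ j ∈ Finset.range (n+2), (j:ℝ) * sqCoef j * sqCoef (n+1-j)
          = ∑ k ∈ Finset.range (n+1), ((k:ℝ)+1) * sqCoef (k+1) * sqCoef (n-k) := by
        rw [Finset.sum_range_succ'] -- ∑_{range (n+2)} f j = ∑_{range (n+1)} f (k+1) + f 0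
        simp
      have e3 : ∑ k ∈ Finset.range (n+1), ((k:ℝ)+1) * sqCoef (k+1) * sqCoef (n-k)
          = ∑ k ∈ Finset.range (n+1), (-(1/2) - (k:ℝ)) * sqCoef k * sqCoef (n-k) := by
        refine Finset.sum_congr rfl fun k hk => ?_
        rw [sqCoef_succ k]
      have e4 : 2 * ∑ k ∈ Finset.range (n+1), (-(1/2) - (k:ℝ)) * sqCoef k * sqCoef (n-k)
          = - ∑ k ∈ Finset.range (n+1), sqCoef k * sqCoef (n-k)
            - 2 * ∑ k ∈ Finset.range (n+1), (k:ℝ) * sqCoef k * sqCoef (n-k) := by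
        rw [Finset.mul_sum, Finset.mul_sum, ← Finset.sum_neg_distrib, ← Finset.sum_sub_distrib]
        refine Finset.sum_congr rfl fun k hk => by ring
      rw [e1, e2, e3, e4, sqCoef_sym_sum n]
      ring
    have hne : ((n:ℝ)+1) ≠ 0 := by positivity
    have h2 : ∑ j ∈ Finset.range (n+2), sqCoef j * sqCoef (n+1-j)
        = -(∑ j ∈ Finset.range (n+1), sqCoef j * sqCoef (n - j)) :=
      mul_left_cancel₀ hne (by rw [key]; ring)
    rw [show n+1+1 = n+2 from rfl, h2, ih]
    simp [pow_succ]


lemma latD_self {ν : ℕ} (x : Fin ν → ℤ) : latD x x = 0 := by simp [latD]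

lemma latD_triangle {ν : ℕ} (x y z : Fin ν → ℤ) : latD x y ≤ latD x z + latD z y := by
  rw [latD, latD, latD, ← Finset.sum_add_distrib]
  refine Finset.sum_le_sum fun i _ => ?_
  have : x i - y i = (x i - z i) + (z i - y i) := by ring
  rw [this]
  exact Int.natAbs_add_le _ _

lemma latD_sub_zero {ν : ℕ} (x z : Fin ν → ℤ) : latD (x - z) 0 = latD x z := by
  simp [latD]

lemma latSummable {ν : ℕ} {β : ℝ} (h0 : 0 ≤ β) (h1 : β < 1) :
    Summable (fun w : Fin ν → ℤ => β ^ latD w 0) := by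
  induction ν with
  | zero =>
    exact .of_finite
  | succ ν ih =>
    have hz : Summable (fun n : ℤ => β ^ n.natAbs) := by
      refine Summable.of_nat_of_neg ?_ ?_
      · simpa using summable_geometric_of_lt_one h0 h1
      · simpa using summable_geometric_of_lt_one h0 h1
    have hprod : Summable (fun p : ℤ × (Fin ν → ℤ) => β ^ p.1.natAbs * β ^ latD p.2 0) := by
      apply summable_mul_of_summable_norm (f := fun n : ℤ => β ^ n.natAbs)
        (g := fun w : Fin ν → ℤ => β ^ latD w 0)
      · simpa [abs_of_nonneg h0] using hz
      · simpa [abs_of_nonneg h0] using ih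
    have := ((Fin.consEquiv (fun _ : Fin (ν+1) => ℤ)).symm.summable_iff
      (f := fun p : ℤ × (Fin ν → ℤ) => β ^ p.1.natAbs * β ^ latD p.2 0)).mpr hprod
    refine this.congr fun w => ?_
    show β ^ (w 0).natAbs * β ^ latD (Fin.tail w) 0 = β ^ latD w 0
    rw [← pow_add]
    congr 1
    rw [latD, latD, Fin.sum_univ_succ]
    simp [Fin.tail]

lemma latTranslate {ν : ℕ} {β : ℝ} (x : Fin ν → ℤ) (f : (Fin ν → ℤ) → ℝ) :
    True := trivial


set_option maxHeartbeats 1000000 in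
/-- exponential off-diagonal decay of `G^{-1/2}`.  If a positive
invertible operator `G` on `ℓ²(ℤ^ν)` has matrix entries with
`|G_{xy} − δ_{xy}| ≤ ε^{|x−y|+1}` and `‖G − I‖ ≤ 1/2`, then its inverse square
root `S = G^{-1/2}` (characterized by `S ≥ 0`, `S² G = G S² = 1`) exists and
satisfies `|S_{xy} − δ_{xy}| ≤ C γ^{|x−y|}` for constants `C` and `γ ∈ (0,1)`
depending only on `ε` and `ν`. -/
theorem stmt5
    {ν : ℕ}
    (G : lp (fun _ : (Fin ν → ℤ) => ℂ) 2 →L[ℂ] lp (fun _ : (Fin ν → ℤ) => ℂ) 2)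
    (hGpos : G.IsPositive) (hGunit : IsUnit G)
    (ε : ℝ) (hε0 : 0 < ε) (hε1 : ε < 1)
    (hdecay : ∀ x y, ‖⟪lp.single 2 x (1 : ℂ), G (lp.single 2 y (1 : ℂ))⟫_ℂ -
        (if x = y then 1 else 0)‖ ≤ ε ^ (latD x y + 1))
    (hnorm : ‖G - 1‖ ≤ 1 / 2) :
    ∃ S : lp (fun _ : (Fin ν → ℤ) => ℂ) 2 →L[ℂ] lp (fun _ : (Fin ν → ℤ) => ℂ) 2,
      S.IsPositive ∧ (S * S) * G = 1 ∧ G * (S * S) = 1 ∧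
      ∃ C γ : ℝ, 0 < C ∧ 0 < γ ∧ γ < 1 ∧
        ∀ x y, ‖⟪lp.single 2 x (1 : ℂ), S (lp.single 2 y (1 : ℂ))⟫_ℂ -
            (if x = y then 1 else 0)‖ ≤ C * γ ^ (latD x y) := by
  classical
  set A := G - 1 with hAdef
  have hAnorm : ‖A‖ ≤ 1/2 := hnorm
  set e : (Fin ν → ℤ) → lp (fun _ : (Fin ν → ℤ) => ℂ) 2 := fun x => lp.single 2 x (1:ℂ) with he
  have he_norm : ∀ x, ‖e x‖ = 1 := by
    intro x
    have := lp.norm_single (p := 2) (E := fun _ : (Fin ν → ℤ) => ℂ) (by norm_num) x (1:ℂ)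
    simpa [he] using this
  have hδ : ∀ x y, ⟪e x, e y⟫_ℂ = if x = y then (1:ℂ) else 0 := by
    intro x y
    rw [he]
    rw [lp.inner_single_left]
    simp only [RCLike.inner_apply, map_one, one_mul]
    rw [lp.single_apply]
    by_cases h : x = y <;> simp [h]
  -- entry of an operator is bounded by its norm
  have entry_le : ∀ (B : lp (fun _ : (Fin ν → ℤ) => ℂ) 2 →L[ℂ] lp (fun _ : (Fin ν → ℤ) => ℂ) 2) x y, ‖⟪e x, B (e y)⟫_ℂ‖ ≤ ‖B‖ := by
    intro B x y
    calc ‖⟪e x, B (e y)⟫_ℂ‖ ≤ ‖e x‖ * ‖B (e y)‖ := norm_inner_le_norm _ _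
      _ ≤ 1 * (‖B‖ * ‖e y‖) := by
          rw [he_norm]
          exact mul_le_mul_of_nonneg_left (B.le_opNorm _) zero_le_one
      _ = ‖B‖ := by rw [he_norm]; ring
  -- the coefficients series
  set u : ℕ → (lp (fun _ : (Fin ν → ℤ) => ℂ) 2 →L[ℂ] lp (fun _ : (Fin ν → ℤ) => ℂ) 2) := fun k => ((sqCoef k : ℝ) : ℂ) • A^k with hu
  have hpowA : ∀ k, ‖A^k‖ ≤ (1/2:ℝ)^k := by
    intro k
    match k with
    | 0 =>
      rw [pow_zero, pow_zero, ContinuousLinearMap.one_def]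
      exact ContinuousLinearMap.norm_id_le
    | (m+1) =>
      calc ‖A^(m+1)‖ ≤ ‖A‖^(m+1) := norm_pow_le' A (Nat.succ_pos m)
        _ ≤ (1/2:ℝ)^(m+1) := pow_le_pow_left₀ (norm_nonneg _) hAnorm _
  have hu_norm : ∀ k, ‖u k‖ ≤ (1/2:ℝ)^k := by
    intro k
    have huk : u k = ((sqCoef k : ℝ) : ℂ) • A^k := rfl
    rw [huk]
    calc ‖((sqCoef k : ℝ) : ℂ) • A^k‖ ≤ ‖((sqCoef k : ℝ) : ℂ)‖ * ‖A^k‖ :=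
          ContinuousLinearMap.opNorm_smul_le _ _
      _ ≤ 1 * (1/2:ℝ)^k := by
          apply mul_le_mul _ (hpowA k) (norm_nonneg _) zero_le_one
          rw [Complex.norm_real, Real.norm_eq_abs]
          exact abs_sqCoef_le_one k
      _ = (1/2:ℝ)^k := one_mul _
  have hgeom : Summable (fun k : ℕ => (1/2:ℝ)^k) :=
    summable_geometric_of_lt_one (by norm_num) (by norm_num)
  have hnorm_sum : Summable (fun k => ‖u k‖) :=
    Summable.of_nonneg_of_le (fun k => norm_nonneg _) hu_norm hgeom
  have hus : Summable u := hnorm_sum.of_norm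
  set T := ∑' k, u k with hT
  have huk' : ∀ k, u k = ((sqCoef k : ℝ) : ℂ) • A^k := fun _ => rfl
  have hnegA : ‖-A‖ < 1 := by rw [norm_neg]; linarith
  have hTT : T * T = ∑' n, (-A)^n := by
    rw [hT, tsum_mul_tsum_eq_tsum_sum_antidiagonal_of_summable_norm hnorm_sum hnorm_sum]
    refine tsum_congr fun n => ?_
    have h1 : ∀ p ∈ Finset.HasAntidiagonal.antidiagonal n, u p.1 * u p.2
        = ((sqCoef p.1 * sqCoef p.2 : ℝ) : ℂ) • A^n := by
      intro p hp
      have hpn : p.1 + p.2 = n := Finset.HasAntidiagonal.mem_antidiagonal.mp hp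
      rw [huk' p.1, huk' p.2, smul_mul_assoc, mul_smul_comm, smul_smul, ← pow_add, hpn]
      push_cast
      ring_nf
    rw [Finset.sum_congr rfl h1, ← Finset.sum_smul]
    have h2 : ∑ p ∈ Finset.HasAntidiagonal.antidiagonal n, ((sqCoef p.1 * sqCoef p.2 : ℝ) : ℂ)
        = (((-1:ℝ)^n : ℝ) : ℂ) := by
      rw [← Complex.ofReal_sum]
      congr 1
      rw [Finset.Nat.sum_antidiagonal_eq_sum_range_succ_mk]
      exact sqCoef_conv n
    rw [h2]
    have h3 : (-A) = ((-1:ℂ)) • A := by simp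
    rw [h3, smul_pow]
    push_cast
    ring_nf
  have hGrw : G = 1 - (-A) := by rw [hAdef]; abel
  -- self-adjointness of T
  have hGsa : IsSelfAdjoint G := hGpos.isSelfAdjoint
  have hAsa : IsSelfAdjoint A := by rw [hAdef]; exact hGsa.sub (IsSelfAdjoint.one _)
  have hTsa : IsSelfAdjoint T := by
    show star T = T
    rw [hT, tsum_star]
    refine tsum_congr fun k => ?_
    rw [huk' k, star_smul, star_pow, hAsa.star_eq, Complex.star_def, Complex.conj_ofReal]
  -- norm of T - 1
  have hu0 : u 0 = 1 := by
    rw [huk' 0]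
    simp [sqCoef]
  have hT1 : T - 1 = ∑' k, u (k+1) := by
    rw [hT, Summable.tsum_eq_zero_add hus, hu0]
    abel
  have hsum1 : Summable (fun k => ‖u (k+1)‖) := by
    exact (summable_nat_add_iff 1).mpr hnorm_sum
  have hT1norm : ‖T - 1‖ ≤ 1 := by
    rw [hT1]
    calc ‖∑' k, u (k+1)‖ ≤ ∑' k, ‖u (k+1)‖ := norm_tsum_le_tsum_norm hsum1
      _ ≤ ∑' k, (1/2:ℝ)^(k+1) := by
          refine Summable.tsum_le_tsum (fun k => hu_norm (k+1)) hsum1 ?_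
          exact (summable_nat_add_iff 1).mpr hgeom
      _ = 1 := by
          have h4 : ∀ k:ℕ, (1/2:ℝ)^(k+1) = (1/2) * (1/2)^k := fun k => by ring
          rw [tsum_congr h4, tsum_mul_left, tsum_geometric_of_lt_one (by norm_num) (by norm_num)]
          norm_num
  refine ⟨T, ⟨hTsa.isSymmetric, ?_⟩, ?_, ?_, ?_⟩
  · -- positivity
    intro x
    rw [ContinuousLinearMap.reApplyInnerSelf_apply]
    have hTx : T x = x + (T - 1) x := by simp
    rw [hTx, inner_add_left, map_add, inner_self_eq_norm_sq]
    have h2 : |RCLike.re ⟪(T-1) x, x⟫_ℂ| ≤ ‖x‖^2 := by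
      calc |RCLike.re ⟪(T-1) x, x⟫_ℂ| ≤ ‖⟪(T-1) x, x⟫_ℂ‖ := RCLike.abs_re_le_norm _
        _ ≤ ‖(T-1) x‖ * ‖x‖ := norm_inner_le_norm _ _
        _ ≤ (‖T-1‖ * ‖x‖) * ‖x‖ :=
            mul_le_mul_of_nonneg_right ((T-1).le_opNorm x) (norm_nonneg _)
        _ ≤ ‖x‖^2 := by nlinarith [norm_nonneg x, norm_nonneg (T-1)]
    have := abs_le.mp h2
    linarith [this.1]
  · rw [hTT, hGrw]
    exact geom_series_mul_neg (-A) hnegA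
  · rw [hTT, hGrw]
    exact mul_neg_geom_series (-A) hnegA
  · -- decay
    set β := Real.sqrt ε with hβ
    have hβ0 : 0 < β := Real.sqrt_pos.mpr hε0
    have hβ1 : β < 1 := by
      rw [hβ, Real.sqrt_lt' one_pos]
      nlinarith
    have hβε : β * β = ε := Real.mul_self_sqrt hε0.le
    have hMsum : Summable (fun w : Fin ν → ℤ => β ^ latD w 0) := latSummable hβ0.le hβ1
    set M := ∑' w : Fin ν → ℤ, β ^ latD w 0 with hM
    have hM0 : 0 ≤ M := tsum_nonneg fun w => pow_nonneg hβ0.le _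
    set K := max (ε * M) 1 with hK
    have hK1 : (1:ℝ) ≤ K := le_max_right _ _
    have hK0 : (0:ℝ) ≤ K := zero_le_one.trans hK1
    have hKεM : ε * M ≤ K := le_max_left _ _
    have htransE : ∀ x : Fin ν → ℤ, (fun z => β ^ latD x z)
        = (fun w : Fin ν → ℤ => β ^ latD w 0) ∘ (Equiv.subLeft x) := by
      intro x
      funext z
      simp only [Function.comp_apply, Equiv.subLeft_apply, latD_sub_zero]
    have htransS : ∀ x : Fin ν → ℤ, Summable (fun z => β ^ latD x z) := by
      intro x
      rw [htransE x]
      exact ((Equiv.subLeft x).summable_iff).mpr hMsum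
    have htransT : ∀ x : Fin ν → ℤ, ∑' z, (β : ℝ) ^ latD x z = M := by
      intro x
      rw [htransE x]
      rw [hM, ← (Equiv.subLeft x).tsum_eq (fun w : Fin ν → ℤ => β ^ latD w 0)]
      rfl
    have hAentry : ∀ x z, ‖⟪e x, A (e z)⟫_ℂ‖ ≤ ε * (β ^ latD x z * β ^ latD x z) := by
      intro x z
      have h1 : ⟪e x, A (e z)⟫_ℂ = ⟪e x, G (e z)⟫_ℂ - (if x = z then 1 else 0) := by
        rw [hAdef]
        rw [ContinuousLinearMap.sub_apply, inner_sub_right, ContinuousLinearMap.one_apply, hδ]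
      rw [h1]
      calc ‖⟪e x, G (e z)⟫_ℂ - (if x = z then 1 else 0)‖ ≤ ε ^ (latD x z + 1) := hdecay x z
        _ = ε * (β ^ latD x z * β ^ latD x z) := by
            rw [pow_succ, ← hβε, mul_pow]
            ring
    -- key inductive entry bound on powers of A
    have key : ∀ k, ∀ x y, ‖⟪e x, (A^k) (e y)⟫_ℂ‖ ≤ β ^ latD x y * K ^ k := by
      intro k
      induction k with
      | zero =>
        intro x y
        simp only [pow_zero, ContinuousLinearMap.one_apply, mul_one]
        rw [hδ]
        by_cases h : x = y
        · subst h
          simp [latD_self]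
        · simp only [h, if_false, norm_zero]
          positivity
      | succ k ih =>
        intro x y
        set v := (A^k) (e y) with hv
        have hv1 : HasSum (fun z => lp.single 2 z (v z)) v :=
          lp.hasSum_single (by norm_num) v
        have hv2 : HasSum (fun z => ((innerSL ℂ (e x)).comp A) (lp.single 2 z (v z)))
            (((innerSL ℂ (e x)).comp A) v) := hv1.mapL _
        have hsingle : ∀ z, (lp.single 2 z (v z) : lp (fun _ : (Fin ν → ℤ) => ℂ) 2)
            = v z • e z := by
          intro z
          rw [he]
          have := lp.single_smul (𝕜 := ℂ) (E := fun _ : (Fin ν → ℤ) => ℂ) 2 z (v z) (1:ℂ)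
          rw [← this]
          simp
        have hv2' : HasSum (fun z => v z * ⟪e x, A (e z)⟫_ℂ) ⟪e x, A v⟫_ℂ := by
          have heq : ∀ z, ((innerSL ℂ (e x)).comp A) (lp.single 2 z (v z))
              = v z * ⟪e x, A (e z)⟫_ℂ := by
            intro z
            rw [hsingle z]
            simp only [ContinuousLinearMap.comp_apply, map_smul, innerSL_apply_apply,
              inner_smul_right, smul_eq_mul]
          have hfg : (fun z => ((innerSL ℂ (e x)).comp A) (lp.single 2 z (v z)))
              = fun z => v z * ⟪e x, A (e z)⟫_ℂ := funext heq
          have heq2 : ((innerSL ℂ (e x)).comp A) v = ⟪e x, A v⟫_ℂ := rfl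
          rw [← hfg, ← heq2]
          exact hv2
        have hvz : ∀ z, ‖v z‖ ≤ β ^ latD z y * K ^ k := by
          intro z
          have h5 : v z = ⟪e z, v⟫_ℂ := by
            rw [he]
            rw [lp.inner_single_left]
            simp [RCLike.inner_apply]
          rw [h5, hv]
          exact ih z y
        have hterm : ∀ z, ‖v z * ⟪e x, A (e z)⟫_ℂ‖
            ≤ (ε * K ^ k * β ^ latD x y) * β ^ latD x z := by
          intro z
          rw [norm_mul]
          calc ‖v z‖ * ‖⟪e x, A (e z)⟫_ℂ‖
              ≤ (β ^ latD z y * K ^ k) * (ε * (β ^ latD x z * β ^ latD x z)) := by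
                apply mul_le_mul (hvz z) (hAentry x z) (norm_nonneg _)
                positivity
            _ = (ε * K ^ k) * β ^ latD x z * (β ^ latD x z * β ^ latD z y) := by ring
            _ ≤ (ε * K ^ k) * β ^ latD x z * β ^ latD x y := by
                apply mul_le_mul_of_nonneg_left _ (by positivity)
                rw [← pow_add]
                exact pow_le_pow_of_le_one hβ0.le hβ1.le (latD_triangle x y z)
            _ = (ε * K ^ k * β ^ latD x y) * β ^ latD x z := by ring
        have hmaj : Summable (fun z => (ε * K ^ k * β ^ latD x y) * β ^ latD x z) :=
          (htransS x).mul_left _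
        have hnorms : Summable (fun z => ‖v z * ⟪e x, A (e z)⟫_ℂ‖) :=
          Summable.of_nonneg_of_le (fun z => norm_nonneg _) hterm hmaj
        have hstep : ⟪e x, ((A^(k+1)) (e y))⟫_ℂ = ⟪e x, A v⟫_ℂ := by
          rw [hv, pow_succ']
          rfl
        calc ‖⟪e x, (A^(k+1)) (e y)⟫_ℂ‖ = ‖⟪e x, A v⟫_ℂ‖ := by rw [hstep]
          _ = ‖∑' z, v z * ⟪e x, A (e z)⟫_ℂ‖ := by rw [hv2'.tsum_eq]
          _ ≤ ∑' z, ‖v z * ⟪e x, A (e z)⟫_ℂ‖ := norm_tsum_le_tsum_norm hnorms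
          _ ≤ ∑' z, (ε * K ^ k * β ^ latD x y) * β ^ latD x z :=
              Summable.tsum_le_tsum hterm hnorms hmaj
          _ = (ε * K ^ k * β ^ latD x y) * M := by rw [tsum_mul_left, htransT x]
          _ ≤ β ^ latD x y * K ^ (k+1) := by
              rw [pow_succ]
              have h6 : (ε * K ^ k * β ^ latD x y) * M = (ε * M) * (β ^ latD x y * K ^ k) := by
                ring
              rw [h6]
              calc (ε * M) * (β ^ latD x y * K ^ k) ≤ K * (β ^ latD x y * K ^ k) := by
                    apply mul_le_mul_of_nonneg_right hKεM (by positivity)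
                _ = β ^ latD x y * (K ^ k * K) := by ring
    -- interpolation with the norm bound
    obtain ⟨p, hpK⟩ := pow_unbounded_of_one_lt (R := ℝ) K one_lt_two
    have hp : K ≤ (2:ℝ)^p := hpK.le
    set q := 2*p+2 with hq
    have hq0 : q ≠ 0 := by omega
    set γ := β ^ ((q:ℝ))⁻¹ with hγ
    have hγq : γ ^ q = β := by
      rw [hγ]
      exact Real.rpow_inv_natCast_pow hβ0.le hq0
    have hγ0 : 0 < γ := Real.rpow_pos_of_pos hβ0 _
    have hγ1 : γ < 1 := Real.rpow_lt_one hβ0.le hβ1 (by positivity)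
    set s := (Real.sqrt 2)⁻¹ with hs
    have hsqrt2 : 1 < Real.sqrt 2 := by
      rw [show (1:ℝ) = Real.sqrt 1 from (Real.sqrt_one).symm]
      exact Real.sqrt_lt_sqrt (by norm_num) (by norm_num)
    have hs0 : 0 < s := by rw [hs]; positivity
    have hs1 : s < 1 := by
      rw [hs]
      exact inv_lt_one_of_one_lt₀ hsqrt2
    have hs2 : s^2 = (1/2:ℝ) := by
      rw [hs, inv_pow, Real.sq_sqrt (by norm_num)]
      norm_num
    have bnd : ∀ k x y, ‖⟪e x, (A^k) (e y)⟫_ℂ‖ ≤ γ ^ latD x y * s ^ k := by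
      intro k x y
      set E := ‖⟪e x, (A^k) (e y)⟫_ℂ‖ with hE
      have hE0 : (0:ℝ) ≤ E := norm_nonneg _
      have h1 : E ≤ β ^ latD x y * K ^ k := key k x y
      have h2 : E ≤ (1/2:ℝ)^k := (entry_le _ x y).trans (hpowA k)
      have hRHS0 : (0:ℝ) ≤ γ ^ latD x y * s ^ k := by positivity
      refine le_of_pow_le_pow_left₀ hq0 hRHS0 ?_
      have hRq : (γ ^ latD x y * s ^ k)^q = β ^ latD x y * ((1/2:ℝ))^(k*(p+1)) := by
        rw [mul_pow]
        congr 1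
        · rw [← pow_mul, mul_comm (latD x y) q, pow_mul, hγq]
        · rw [← pow_mul, show k * q = 2*(k*(p+1)) by rw [hq]; ring, pow_mul, hs2]
      rw [hRq]
      have hKk : K^k ≤ (2:ℝ)^(p*k) := by
        calc K^k ≤ ((2:ℝ)^p)^k := pow_le_pow_left₀ hK0 hp k
          _ = (2:ℝ)^(p*k) := by rw [← pow_mul]
      have hsplit : ((1/2:ℝ)^k)^(2*p+1) = (1/2:ℝ)^(p*k) * (1/2:ℝ)^(k*(p+1)) := by
        rw [← pow_mul, ← pow_add]
        congr 1
        ring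
      have hhalf : ((2:ℝ)^(p*k)) * ((1/2:ℝ)^(p*k)) = 1 := by
        rw [← mul_pow]
        norm_num
      calc E^q = E^(2*p+1) * E := by rw [hq, pow_succ]
        _ ≤ ((1/2:ℝ)^k)^(2*p+1) * (β ^ latD x y * K ^ k) := by
            apply mul_le_mul (pow_le_pow_left₀ hE0 h2 _) h1 hE0 (by positivity)
        _ = β ^ latD x y * (((2:ℝ)^(p*k) * (1/2:ℝ)^(p*k)) * (1/2:ℝ)^(k*(p+1))) * K^k
              * ((2:ℝ)^(p*k))⁻¹ := by
            rw [hsplit, hhalf]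
            field_simp
            rw [mul_comm, hhalf]
        _ ≤ β ^ latD x y * ((1/2:ℝ))^(k*(p+1)) := by
            rw [hhalf]
            have h11 : β ^ latD x y * (1 * (1/2:ℝ)^(k*(p+1))) * K^k * ((2:ℝ)^(p*k))⁻¹
                = (β ^ latD x y * (1/2:ℝ)^(k*(p+1))) * (K^k * ((2:ℝ)^(p*k))⁻¹) := by ring
            rw [h11]
            have h12 : K^k * ((2:ℝ)^(p*k))⁻¹ ≤ 1 := by
              rw [mul_inv_le_iff₀ (by positivity), one_mul]
              exact hKk
            calc (β ^ latD x y * (1/2:ℝ)^(k*(p+1))) * (K^k * ((2:ℝ)^(p*k))⁻¹)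
                ≤ (β ^ latD x y * (1/2:ℝ)^(k*(p+1))) * 1 :=
                  mul_le_mul_of_nonneg_left h12 (by positivity)
              _ = β ^ latD x y * (1/2:ℝ)^(k*(p+1)) := mul_one _
    -- conclusion
    refine ⟨s * (1-s)⁻¹, γ, mul_pos hs0 (inv_pos.mpr (by linarith)), hγ0, hγ1, ?_⟩
    intro x y
    have hsT : HasSum (fun k => ((sqCoef k:ℝ):ℂ) * ⟪e x, (A^k) (e y)⟫_ℂ) ⟪e x, T (e y)⟫_ℂ := by
      have h7 := hus.hasSum.mapL ((innerSL ℂ (e x)).comp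
        (ContinuousLinearMap.apply ℂ (lp (fun _ : (Fin ν → ℤ) => ℂ) 2) (e y)))
      have h8 : (fun k => ((innerSL ℂ (e x)).comp
            (ContinuousLinearMap.apply ℂ (lp (fun _ : (Fin ν → ℤ) => ℂ) 2) (e y))) (u k))
          = fun k => ((sqCoef k:ℝ):ℂ) * ⟪e x, (A^k) (e y)⟫_ℂ := by
        funext k
        rw [huk' k]
        simp only [ContinuousLinearMap.comp_apply, ContinuousLinearMap.apply_apply,
          ContinuousLinearMap.smul_apply, innerSL_apply_apply, inner_smul_right, smul_eq_mul]
      rw [← h8]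
      exact h7
    have hfs : Summable (fun k => ((sqCoef k:ℝ):ℂ) * ⟪e x, (A^k) (e y)⟫_ℂ) := hsT.summable
    have hf0 : ((sqCoef 0:ℝ):ℂ) * ⟪e x, ((A^0) (e y))⟫_ℂ = (if x = y then (1:ℂ) else 0) := by
      rw [pow_zero, ContinuousLinearMap.one_apply, hδ x y]
      simp [sqCoef]
    have heq9 : ⟪e x, T (e y)⟫_ℂ - (if x = y then (1:ℂ) else 0)
        = ∑' k, ((sqCoef (k+1):ℝ):ℂ) * ⟪e x, (A^(k+1)) (e y)⟫_ℂ := by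
      rw [← hsT.tsum_eq, Summable.tsum_eq_zero_add hfs, hf0]
      ring
    rw [heq9]
    have hfb : ∀ k, ‖((sqCoef (k+1):ℝ):ℂ) * ⟪e x, (A^(k+1)) (e y)⟫_ℂ‖
        ≤ γ ^ latD x y * s^(k+1) := by
      intro k
      rw [norm_mul]
      calc ‖((sqCoef (k+1):ℝ):ℂ)‖ * ‖⟪e x, (A^(k+1)) (e y)⟫_ℂ‖
          ≤ 1 * (γ ^ latD x y * s^(k+1)) := by
            apply mul_le_mul _ (bnd (k+1) x y) (norm_nonneg _) zero_le_one
            rw [Complex.norm_real, Real.norm_eq_abs]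
            exact abs_sqCoef_le_one _
        _ = γ ^ latD x y * s^(k+1) := one_mul _
    have hmaj2 : Summable (fun k : ℕ => γ ^ latD x y * s^(k+1)) := by
      apply Summable.mul_left
      exact (summable_nat_add_iff 1).mpr (summable_geometric_of_lt_one hs0.le hs1)
    have hnorms2 : Summable (fun k => ‖((sqCoef (k+1):ℝ):ℂ) * ⟪e x, (A^(k+1)) (e y)⟫_ℂ‖) :=
      Summable.of_nonneg_of_le (fun k => norm_nonneg _) hfb hmaj2
    calc ‖∑' k, ((sqCoef (k+1):ℝ):ℂ) * ⟪e x, (A^(k+1)) (e y)⟫_ℂ‖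
        ≤ ∑' k, ‖((sqCoef (k+1):ℝ):ℂ) * ⟪e x, (A^(k+1)) (e y)⟫_ℂ‖ :=
          norm_tsum_le_tsum_norm hnorms2
      _ ≤ ∑' k, γ ^ latD x y * s^(k+1) := Summable.tsum_le_tsum hfb hnorms2 hmaj2
      _ = s * (1-s)⁻¹ * γ ^ latD x y := by
          have h10 : ∀ k:ℕ, γ ^ latD x y * s^(k+1) = (γ ^ latD x y * s) * s^k :=
            fun k => by ring
          rw [tsum_congr h10, tsum_mul_left, tsum_geometric_of_lt_one hs0.le hs1]
          ring
end

section
/- Unique exponential coordinates for vectors near the vacuum: let Λ be finite, H_Λ = ⊗_{x∈Λ}H_x with distinguished product vector Ω_{Λ,0}. For every v ∈ H_Λ with ⟨v, Ω_{Λ,0}⟩ = 1, there exists a unique collection {v_I ∈ H'_I}_{∅≠I⊆Λ} such that exp(Σ_{∅≠I⊆Λ} \hat{v}_I) Ω_{Λ,0} = v, where \hat{v}_I are the commuting creation operators and the exponential is a finite sum since products of more than |Λ| of the \hat{v}_I vanish. -/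
open scoped InnerProductSpace

namespace Stmt14Aux

variable {ι : Type*} [DecidableEq ι]

def lU (L : List (Finset ι)) : Finset ι := L.foldr (· ∪ ·) ∅

@[simp] lemma lU_nil : lU ([] : List (Finset ι)) = ∅ := rfl

@[simp] lemma lU_cons (a : Finset ι) (L : List (Finset ι)) : lU (a :: L) = a ∪ lU L := rfl

lemma subset_lU {L : List (Finset ι)} {J : Finset ι} (h : J ∈ L) : J ⊆ lU L := by
  induction L with
  | nil => simp at h
  | cons a L ih =>
    rcases List.mem_cons.1 h with h | h
    · subst h; exact Finset.subset_union_left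
    · exact (ih h).trans Finset.subset_union_right

lemma lU_subset {L : List (Finset ι)} {Λ : Finset ι} (h : ∀ J ∈ L, J ⊆ Λ) : lU L ⊆ Λ := by
  induction L with
  | nil => simp
  | cons a L ih =>
    exact Finset.union_subset (h a (by simp)) (ih fun J hJ => h J (List.mem_cons_of_mem _ hJ))

lemma disjoint_lU {L : List (Finset ι)} {I : Finset ι} (h : ∀ J ∈ L, Disjoint I J) :
    Disjoint I (lU L) := by
  induction L with
  | nil => simp
  | cons a L ih =>
    rw [lU_cons, Finset.disjoint_union_right]
    exact ⟨h a (by simp), ih fun J hJ => h J (List.mem_cons_of_mem _ hJ)⟩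

variable {𝓚 : Type*} [NormedAddCommGroup 𝓚] [InnerProductSpace ℂ 𝓚]
  {S : Finset ι → Submodule ℂ 𝓚} {Ω : 𝓚}
  {hat : Finset ι → 𝓚 →ₗ[ℂ] (𝓚 →L[ℂ] 𝓚)} {f : Finset ι → 𝓚}

section prods

lemma prod_eq_hat (hhatmul : ∀ I J, Disjoint I J → ∀ u ∈ S I, ∀ w ∈ S J,
      ∃ z ∈ S (I ∪ J), hat I u * hat J w = hat (I ∪ J) z) :
    ∀ L : List (Finset ι), L ≠ [] → L.Pairwise Disjoint → (∀ J ∈ L, f J ∈ S J) →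
      ∃ z ∈ S (lU L), (L.map fun J => hat J (f J)).prod = hat (lU L) z := by
  intro L
  induction L with
  | nil => intro h; exact absurd rfl h
  | cons a L ih =>
    intro _ hpd hmem
    rcases List.pairwise_cons.1 hpd with ⟨hdisj, hpd'⟩
    rcases eq_or_ne L [] with rfl | hL
    · refine ⟨f a, ?_, ?_⟩
      · simpa using hmem a (by simp)
      · simp
    · obtain ⟨z, hz, hprod⟩ := ih hL hpd' fun J hJ => hmem J (List.mem_cons_of_mem _ hJ)
      obtain ⟨z', hz', hmul⟩ := hhatmul a (lU L) (disjoint_lU hdisj)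
        (f a) (hmem a (by simp)) z hz
      refine ⟨z', hz', ?_⟩
      rw [List.map_cons, List.prod_cons, hprod, hmul, lU_cons]

lemma prod_eq_zero' (hhatmul : ∀ I J, Disjoint I J → ∀ u ∈ S I, ∀ w ∈ S J,
      ∃ z ∈ S (I ∪ J), hat I u * hat J w = hat (I ∪ J) z)
    (hhat0 : ∀ I J, (I ∩ J).Nonempty → ∀ u ∈ S I, ∀ w ∈ S J,
      hat I u * hat J w = 0) :
    ∀ L : List (Finset ι), ¬ L.Pairwise Disjoint → (∀ J ∈ L, f J ∈ S J) →
      (∀ J ∈ L, J.Nonempty) → (L.map fun J => hat J (f J)).prod = 0 := by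
  intro L
  induction L with
  | nil => intro h; exact absurd List.Pairwise.nil h
  | cons a L ih =>
    intro hnpd hmem hne
    rw [List.map_cons, List.prod_cons]
    by_cases hpd : L.Pairwise Disjoint
    · have : ¬ ∀ J ∈ L, Disjoint a J := fun h => hnpd (List.pairwise_cons.2 ⟨h, hpd⟩)
      push_neg at this
      obtain ⟨J, hJL, hJ⟩ := this
      have hLne : L ≠ [] := by rintro rfl; simp at hJL
      obtain ⟨z, hz, hprod⟩ := prod_eq_hat hhatmul L hLne hpd
        fun J hJ => hmem J (List.mem_cons_of_mem _ hJ)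
      rw [hprod]
      refine hhat0 a (lU L) ?_ (f a) (hmem a (by simp)) z hz
      obtain ⟨x, hxa, hxJ⟩ := Finset.not_disjoint_iff.1 hJ
      exact ⟨x, Finset.mem_inter.2 ⟨hxa, subset_lU hJL hxJ⟩⟩
    · rw [ih hpd (fun J hJ => hmem J (List.mem_cons_of_mem _ hJ))
        (fun J hJ => hne J (List.mem_cons_of_mem _ hJ)), mul_zero]

lemma prod_apply_mem (hhatmul : ∀ I J, Disjoint I J → ∀ u ∈ S I, ∀ w ∈ S J,
      ∃ z ∈ S (I ∪ J), hat I u * hat J w = hat (I ∪ J) z)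
    (hhat0 : ∀ I J, (I ∩ J).Nonempty → ∀ u ∈ S I, ∀ w ∈ S J,
      hat I u * hat J w = 0)
    (hS0 : S ∅ = Submodule.span ℂ {Ω})
    (hhatvac : ∀ I, ∀ u ∈ S I, hat I u Ω = u) :
    ∀ L : List (Finset ι), (∀ J ∈ L, f J ∈ S J) → (∀ J ∈ L, J.Nonempty) →
      (L.map fun J => hat J (f J)).prod Ω ∈ S (lU L) := by
  intro L hmem hne
  by_cases hpd : L.Pairwise Disjoint
  · rcases eq_or_ne L [] with rfl | hL
    · simpa [hS0] using Submodule.mem_span_singleton_self Ω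
    · obtain ⟨z, hz, hprod⟩ := prod_eq_hat hhatmul L hL hpd hmem
      rw [hprod, hhatvac _ z hz]; exact hz
  · rw [prod_eq_zero' hhatmul hhat0 L hpd hmem hne]
    simp

end prods

theorem pow_expand {R : Type*} [Semiring R] {α : Type*} [Fintype α] (x : α → R) :
    ∀ k : ℕ, (∑ i, x i) ^ k = ∑ g : Fin k → α, (List.ofFn fun j => x (g j)).prod
  | 0 => by simp
  | (k+1) => by
    rw [pow_succ', pow_expand x k, Finset.sum_mul_sum,
      ← Fintype.sum_prod_type' fun i (g : Fin k → α) => x i * (List.ofFn fun j => x (g j)).prod]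
    refine (Fintype.sum_equiv (Fin.consEquiv fun _ => α).symm _ _ fun g => ?_).symm
    simp [List.ofFn_succ, Fin.consEquiv, Fin.zero_succAbove, Fin.tail]

variable [CompleteSpace 𝓚]

/-- The `S I`-component of `exp(∑ v̂_I) Ω`. -/
noncomputable def cc (Λ : Finset ι) (Ω : 𝓚) (hat : Finset ι → 𝓚 →ₗ[ℂ] (𝓚 →L[ℂ] 𝓚))
    (f : Finset ι → 𝓚) (I : Finset ι) : 𝓚 :=
  ∑ k ∈ Finset.range (Λ.card + 1), ((k.factorial : ℂ)⁻¹) •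
    ∑ g ∈ Finset.univ.filter
        (fun g : Fin k → {J // J ∈ Λ.powerset.erase ∅} =>
          lU (List.ofFn fun j => ((g j : Finset ι))) = I),
      ((List.ofFn fun j => ((g j : Finset ι))).map fun J => hat J (f J)).prod Ω

lemma mem_s_iff {Λ J : Finset ι} : J ∈ Λ.powerset.erase ∅ ↔ J.Nonempty ∧ J ⊆ Λ := by
  rw [Finset.mem_erase, Finset.mem_powerset, Finset.nonempty_iff_ne_empty]

lemma sum_cc (Λ : Finset ι) (Ω : 𝓚) (hat : Finset ι → 𝓚 →ₗ[ℂ] (𝓚 →L[ℂ] 𝓚))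
    (f : Finset ι → 𝓚) :
    (∑ k ∈ Finset.range (Λ.card + 1), ((k.factorial : ℂ)⁻¹) •
      (∑ I ∈ Λ.powerset.erase ∅, hat I (f I)) ^ k) Ω = ∑ I ∈ Λ.powerset, cc Λ Ω hat f I := by
  have h1 : ∀ k : ℕ, ((∑ I ∈ Λ.powerset.erase ∅, hat I (f I)) ^ k) Ω
      = ∑ g : Fin k → {J // J ∈ Λ.powerset.erase ∅},
          ((List.ofFn fun j => ((g j : Finset ι))).map fun J => hat J (f J)).prod Ω := by
    intro k
    rw [← Finset.sum_coe_sort (Λ.powerset.erase ∅) (fun I => hat I (f I)), pow_expand]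
    simp [ContinuousLinearMap.sum_apply, List.map_ofFn, Function.comp_def]
  have h2 : ∀ k : ℕ, (∑ g : Fin k → {J // J ∈ Λ.powerset.erase ∅},
          ((List.ofFn fun j => ((g j : Finset ι))).map fun J => hat J (f J)).prod Ω)
      = ∑ I ∈ Λ.powerset, ∑ g ∈ Finset.univ.filter
          (fun g : Fin k → {J // J ∈ Λ.powerset.erase ∅} =>
            lU (List.ofFn fun j => ((g j : Finset ι))) = I),
          ((List.ofFn fun j => ((g j : Finset ι))).map fun J => hat J (f J)).prod Ω := by
    intro k
    refine (Finset.sum_fiberwise_of_maps_to (fun g _ => ?_) _).symm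
    refine Finset.mem_powerset.2 (lU_subset fun J hJ => ?_)
    obtain ⟨j, rfl⟩ := List.mem_ofFn.1 hJ
    exact Finset.mem_powerset.1 (Finset.mem_of_mem_erase (g j).2)
  have h3 : (∑ k ∈ Finset.range (Λ.card + 1), ((k.factorial : ℂ)⁻¹) •
      (∑ I ∈ Λ.powerset.erase ∅, hat I (f I)) ^ k) Ω
      = ∑ k ∈ Finset.range (Λ.card + 1), ((k.factorial : ℂ)⁻¹) •
        (((∑ I ∈ Λ.powerset.erase ∅, hat I (f I)) ^ k) Ω) := by
    simp [ContinuousLinearMap.sum_apply]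
  rw [h3]
  simp_rw [h1, h2]
  rw [Finset.sum_congr rfl fun k (_ : k ∈ Finset.range (Λ.card + 1)) =>
    (Finset.smul_sum (r := ((k.factorial : ℂ)⁻¹)))]
  rw [Finset.sum_comm]
  rfl

lemma cc_mem
    (hhatmul : ∀ I J, Disjoint I J → ∀ u ∈ S I, ∀ w ∈ S J,
      ∃ z ∈ S (I ∪ J), hat I u * hat J w = hat (I ∪ J) z)
    (hhat0 : ∀ I J, (I ∩ J).Nonempty → ∀ u ∈ S I, ∀ w ∈ S J,
      hat I u * hat J w = 0)
    (hS0 : S ∅ = Submodule.span ℂ {Ω})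
    (hhatvac : ∀ I, ∀ u ∈ S I, hat I u Ω = u)
    {Λ : Finset ι} (hmf : ∀ J, f J ∈ S J) (I : Finset ι) :
    cc Λ Ω hat f I ∈ S I := by
  refine Submodule.sum_mem _ fun k _ => Submodule.smul_mem _ _
    (Submodule.sum_mem _ fun g hg => ?_)
  rw [Finset.mem_filter] at hg
  rw [← hg.2]
  refine prod_apply_mem hhatmul hhat0 hS0 hhatvac _ (fun J _ => hmf J) (fun J hJ => ?_)
  obtain ⟨j, rfl⟩ := List.mem_ofFn.1 hJ
  exact (mem_s_iff.1 (g j).2).1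

lemma cc_empty {Λ : Finset ι} : cc Λ Ω hat f ∅ = Ω := by
  unfold cc
  rw [Finset.sum_eq_single_of_mem 0 (Finset.mem_range.2 (Nat.succ_pos _))]
  · have h : (Finset.univ.filter
        (fun g : Fin 0 → {J // J ∈ Λ.powerset.erase ∅} =>
          lU (List.ofFn fun j => ((g j : Finset ι))) = ∅)) = Finset.univ := by
      refine Finset.filter_true_of_mem fun g _ => ?_
      simp [List.ofFn_zero]
    rw [h]
    simp
  · intro k _ hk
    have h : (Finset.univ.filter
        (fun g : Fin k → {J // J ∈ Λ.powerset.erase ∅} =>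
          lU (List.ofFn fun j => ((g j : Finset ι))) = ∅)) = ∅ := by
      refine Finset.filter_eq_empty_iff.2 fun g _ => ?_
      intro heq
      have j0 : Fin k := ⟨0, Nat.pos_of_ne_zero hk⟩
      have h1 := subset_lU (L := List.ofFn fun j => ((g j : Finset ι)))
        (List.mem_ofFn.2 ⟨j0, rfl⟩)
      rw [heq] at h1
      have h2 := (mem_s_iff.1 (g j0).2).1
      rw [Finset.subset_empty] at h1
      exact Finset.not_nonempty_empty (h1 ▸ h2)
    rw [h, Finset.sum_empty, smul_zero]

lemma cc_diff
    (hhatmul : ∀ I J, Disjoint I J → ∀ u ∈ S I, ∀ w ∈ S J,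
      ∃ z ∈ S (I ∪ J), hat I u * hat J w = hat (I ∪ J) z)
    (hhat0 : ∀ I J, (I ∩ J).Nonempty → ∀ u ∈ S I, ∀ w ∈ S J,
      hat I u * hat J w = 0)
    (hhatvac : ∀ I, ∀ u ∈ S I, hat I u Ω = u)
    {Λ : Finset ι} (f f' : Finset ι → 𝓚)
    (hmf : ∀ J, f J ∈ S J) (hmf' : ∀ J, f' J ∈ S J)
    {I : Finset ι} (hIne : I.Nonempty) (hIΛ : I ⊆ Λ)
    (hagree : ∀ J, J ⊂ I → f J = f' J) :
    cc Λ Ω hat f I - cc Λ Ω hat f' I = f I - f' I := by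
  have hIs : I ∈ Λ.powerset.erase ∅ := mem_s_iff.2 ⟨hIne, hIΛ⟩
  have hΛcard : 1 ≤ Λ.card := Finset.card_pos.2 ⟨hIne.choose, hIΛ hIne.choose_spec⟩
  unfold cc
  rw [← Finset.sum_sub_distrib]
  rw [Finset.sum_eq_single_of_mem 1 (Finset.mem_range.2 (by omega))]
  · -- k = 1 term
    have hfil : (Finset.univ.filter
        (fun g : Fin 1 → {J // J ∈ Λ.powerset.erase ∅} =>
          lU (List.ofFn fun j => ((g j : Finset ι))) = I))
        = {fun _ => (⟨I, hIs⟩ : {J // J ∈ Λ.powerset.erase ∅})} := by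
      ext g
      simp only [Finset.mem_filter, Finset.mem_singleton, Finset.mem_univ, true_and]
      constructor
      · intro h
        simp only [List.ofFn_succ, List.ofFn_zero, lU_cons, lU_nil,
          Finset.union_empty] at h
        funext j
        have hj : j = 0 := Subsingleton.elim _ _
        subst hj
        exact Subtype.ext h
      · rintro rfl
        simp [List.ofFn_succ, List.ofFn_zero]
    rw [hfil, Finset.sum_singleton, Finset.sum_singleton]
    simp [List.ofFn_succ, List.ofFn_zero, hhatvac I (f I) (hmf I),
      hhatvac I (f' I) (hmf' I)]
  · intro k _ hk1
    rw [← smul_sub, ← Finset.sum_sub_distrib]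
    rw [Finset.sum_eq_zero, smul_zero]
    intro g hg
    have hU : lU (List.ofFn fun j => ((g j : Finset ι))) = I := (Finset.mem_filter.1 hg).2
    have hne : ∀ J ∈ (List.ofFn fun j => ((g j : Finset ι))), J.Nonempty := by
      intro J hJ
      obtain ⟨j, rfl⟩ := List.mem_ofFn.1 hJ
      exact (mem_s_iff.1 (g j).2).1
    rcases Nat.eq_zero_or_pos k with rfl | hkpos
    · exfalso
      simp only [List.ofFn_zero, lU_nil] at hU
      rw [← hU] at hIne
      exact Finset.not_nonempty_empty hIne
    · have hk2 : 2 ≤ k := by omega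
      by_cases hpd : (List.ofFn fun j => ((g j : Finset ι))).Pairwise Disjoint
      · have hentries : ∀ j : Fin k, ((g j : Finset ι)) ⊂ I := by
          intro j
          have hsub : ((g j : Finset ι)) ⊆ I := by
            have := subset_lU (L := List.ofFn fun j => ((g j : Finset ι)))
              (List.mem_ofFn.2 ⟨j, rfl⟩)
            rwa [hU] at this
          refine Finset.ssubset_iff_subset_ne.2 ⟨hsub, ?_⟩
          intro hEq
          have hj' : ((j : ℕ) = 0 → (1 : ℕ) < k) ∧ ((j : ℕ) ≠ 0 → (0 : ℕ) < k) :=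
            ⟨fun _ => by omega, fun _ => by omega⟩
          set j' : Fin k := if h : (j : ℕ) = 0 then ⟨1, hj'.1 h⟩ else ⟨0, hj'.2 h⟩ with hj'def
          have hjj' : j ≠ j' := by
            by_cases h0 : (j : ℕ) = 0 <;> simp [hj'def, h0, Fin.ext_iff] <;> omega
          have hp := List.pairwise_ofFn.1 hpd
          have hdisj : Disjoint ((g j : Finset ι)) ((g j' : Finset ι)) := by
            by_cases h0 : (j : ℕ) = 0
            · exact hp (by simp [hj'def, h0, Fin.lt_def] <;> omega)
            · exact (hp (by simp [hj'def, h0, Fin.lt_def] <;> omega)).symm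
          have hsub' : ((g j' : Finset ι)) ⊆ ((g j : Finset ι)) := by
            rw [hEq]
            have := subset_lU (L := List.ofFn fun j => ((g j : Finset ι)))
              (List.mem_ofFn.2 ⟨j', rfl⟩)
            rwa [hU] at this
          have hempty : ((g j' : Finset ι)) = ∅ :=
            disjoint_self.1 (hdisj.mono_left hsub')
          exact absurd hempty (mem_s_iff.1 (g j').2).1.ne_empty
        have hlist : (List.map (fun J => hat J (f J)) (List.ofFn fun j => ((g j : Finset ι))))
            = List.map (fun J => hat J (f' J)) (List.ofFn fun j => ((g j : Finset ι))) := by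
          refine List.map_congr_left fun J hJ => ?_
          obtain ⟨j, rfl⟩ := List.mem_ofFn.1 hJ
          rw [hagree _ (hentries j)]
        rw [hlist, sub_self]
      · rw [prod_eq_zero' hhatmul hhat0 _ hpd (fun J _ => hmf J) hne,
          prod_eq_zero' hhatmul hhat0 _ hpd (fun J _ => hmf' J) hne]
        simp

lemma orth_eq (horth : ∀ I J, I ≠ J → ∀ u ∈ S I, ∀ w ∈ S J, ⟪u, w⟫_ℂ = 0)
    {P : Finset (Finset ι)} {a b : Finset ι → 𝓚}
    (ha : ∀ I ∈ P, a I ∈ S I) (hb : ∀ I ∈ P, b I ∈ S I)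
    (hsum : ∑ I ∈ P, a I = ∑ I ∈ P, b I) : ∀ I ∈ P, a I = b I := by
  intro I₀ hI₀
  have hd : ∑ I ∈ P, (a I - b I) = 0 := by
    rw [Finset.sum_sub_distrib, hsum, sub_self]
  have h0 : ⟪a I₀ - b I₀, a I₀ - b I₀⟫_ℂ = 0 := by
    have h1 : ⟪a I₀ - b I₀, ∑ I ∈ P, (a I - b I)⟫_ℂ = 0 := by
      rw [hd, inner_zero_right]
    rw [inner_sum] at h1
    rwa [Finset.sum_eq_single_of_mem I₀ hI₀ fun J hJ hne =>
      horth I₀ J (Ne.symm hne) _ (Submodule.sub_mem _ (ha I₀ hI₀) (hb I₀ hI₀))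
        _ (Submodule.sub_mem _ (ha J hJ) (hb J hJ))] at h1
  rw [inner_self_eq_zero] at h0
  exact sub_eq_zero.1 h0

lemma exists_decomp {P : Finset (Finset ι)} {x : 𝓚} (hx : x ∈ P.sup S) :
    ∃ u : Finset ι → 𝓚, (∀ I, u I ∈ S I) ∧ ∑ I ∈ P, u I = x := by
  induction P using Finset.induction_on generalizing x with
  | empty =>
    rw [Finset.sup_empty] at hx
    exact ⟨fun _ => 0, fun I => Submodule.zero_mem _,
      by simpa using ((Submodule.mem_bot ℂ).1 hx).symm⟩
  | @insert a P hnot ih =>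
    rw [Finset.sup_insert] at hx
    obtain ⟨y, hy, z, hz, rfl⟩ := Submodule.mem_sup.1 hx
    obtain ⟨u, hu, husum⟩ := ih hz
    refine ⟨fun I => if I = a then y else u I, fun I => ?_, ?_⟩
    · by_cases h : I = a
      · subst h; simpa using hy
      · simpa [h] using hu I
    · rw [Finset.sum_insert hnot, if_pos rfl,
        Finset.sum_congr rfl fun I hI => if_neg (by rintro rfl; exact hnot hI), husum]

end Stmt14Aux

open Stmt14Aux in
/-- unique exponential coordinates for vectors near the vacuum.
Relative to the orthogonal decomposition `H_Λ = ⊕_{I⊆Λ} H'_I ⊗ Ω_{Λ∖I,0}`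
(subspaces `S I`) and the commuting creation operators `hat I`, every vector
`v` with `⟨Ω_{Λ,0}, v⟩ = 1` admits a unique collection `{v_I ∈ H'_I}_{∅≠I⊆Λ}`
with `exp(Σ_{∅≠I⊆Λ} v̂_I) Ω_{Λ,0} = v`; the exponential is the finite sum
`Σ_{k≤|Λ|} (1/k!)(Σ_I v̂_I)^k` since products of more than `|Λ|` creation
operators vanish. -/
theorem stmt14
    {ι : Type*} [DecidableEq ι] {𝓚 : Type*}
    [NormedAddCommGroup 𝓚] [InnerProductSpace ℂ 𝓚] [CompleteSpace 𝓚]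
    (Λ : Finset ι) (Ω : 𝓚) (hΩ : ‖Ω‖ = 1)
    (S : Finset ι → Submodule ℂ 𝓚)
    (hS0 : S ∅ = Submodule.span ℂ {Ω})
    (horth : ∀ I J, I ≠ J → ∀ u ∈ S I, ∀ w ∈ S J, ⟪u, w⟫_ℂ = 0)
    (hcomplete : ∀ v : 𝓚, v ∈ ⨆ I ∈ Λ.powerset, S I)
    (hat : Finset ι → 𝓚 →ₗ[ℂ] (𝓚 →L[ℂ] 𝓚))
    (hhatvac : ∀ I, ∀ u ∈ S I, hat I u Ω = u)
    (hhat0 : ∀ I J, (I ∩ J).Nonempty → ∀ u ∈ S I, ∀ w ∈ S J,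
      hat I u * hat J w = 0)
    (hhatmul : ∀ I J, Disjoint I J → ∀ u ∈ S I, ∀ w ∈ S J,
      ∃ z ∈ S (I ∪ J), hat I u * hat J w = hat (I ∪ J) z) :
    ∀ v : 𝓚, ⟪Ω, v⟫_ℂ = 1 →
      ∃! f : Finset ι → 𝓚,
        (∀ I, f I ∈ S I) ∧
        (∀ I, ¬(I.Nonempty ∧ I ⊆ Λ) → f I = 0) ∧
        (∑ k ∈ Finset.range (Λ.card + 1), ((k.factorial : ℂ)⁻¹) •
          (∑ I ∈ Λ.powerset.erase ∅, hat I (f I)) ^ k) Ω = v := by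
  classical
  intro v hv
  have hvsup : v ∈ Λ.powerset.sup S := by
    rw [Finset.sup_eq_iSup]; exact hcomplete v
  obtain ⟨u, humem, husum⟩ := exists_decomp hvsup
  have hΩmem : Ω ∈ S ∅ := by rw [hS0]; exact Submodule.mem_span_singleton_self Ω
  have hu0 : u ∅ = Ω := by
    have hm := humem ∅
    rw [hS0, Submodule.mem_span_singleton] at hm
    obtain ⟨a, ha⟩ := hm
    have h1 : (1 : ℂ) = ⟪Ω, u ∅⟫_ℂ := by
      rw [← hv, ← husum, inner_sum]
      exact (Finset.sum_eq_single_of_mem ∅ (Finset.empty_mem_powerset Λ)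
        fun J hJ hne => horth ∅ J (Ne.symm hne) Ω hΩmem _ (humem J)).symm.symm
    rw [← ha, inner_smul_right, inner_self_eq_norm_sq_to_K, hΩ] at h1
    have ha1 : a = 1 := by simpa using h1.symm
    rw [← ha, ha1, one_smul]
  set n := Λ.card with hn
  let Φ : (Finset ι → 𝓚) → (Finset ι → 𝓚) := fun p I =>
    if I.Nonempty ∧ I ⊆ Λ then
      u I - cc Λ Ω hat (fun J => if J ⊂ I then p J else 0) I
    else 0
  have Φdef : ∀ p I, Φ p I =
      if I.Nonempty ∧ I ⊆ Λ then
        u I - cc Λ Ω hat (fun J => if J ⊂ I then p J else 0) I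
      else 0 := fun p I => rfl
  let gs : ℕ → (Finset ι → 𝓚) := fun m => Φ^[m] 0
  have gsdef : ∀ m, gs m = Φ^[m] 0 := fun m => rfl
  have hkey : ∀ (t : ℕ) (p q : Finset ι → 𝓚), (∀ J : Finset ι, J.card < t → p J = q J) →
      ∀ J : Finset ι, J.card ≤ t → Φ p J = Φ q J := by
    intro t p q hpq J hJ
    rw [Φdef, Φdef]
    by_cases h : J.Nonempty ∧ J ⊆ Λ
    · rw [if_pos h, if_pos h]
      have htr : (fun K => if K ⊂ J then p K else 0)
          = (fun K => if K ⊂ J then q K else 0) := by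
        funext K
        by_cases hK : K ⊂ J
        · rw [if_pos hK, if_pos hK, hpq K (lt_of_lt_of_le (Finset.card_lt_card hK) hJ)]
        · rw [if_neg hK, if_neg hK]
      rw [htr]
    · rw [if_neg h, if_neg h]
  have hstab : ∀ m : ℕ, ∀ J : Finset ι, J.card < m → gs m J = gs (m+1) J := by
    intro m
    induction m with
    | zero => intro J hJ; omega
    | succ m ih =>
      intro J hJ
      have h1 : gs (m+1) = Φ (gs m) := Function.iterate_succ_apply' Φ m 0
      have h2 : gs (m+1+1) = Φ (gs (m+1)) := Function.iterate_succ_apply' Φ (m+1) 0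
      rw [h1, h2]
      exact hkey m (gs m) (gs (m+1)) ih J (by omega)
  set F : Finset ι → 𝓚 := gs (n+1) with hF
  have hfix : ∀ J, Φ F J = F J := by
    intro J
    by_cases hJ : J.card ≤ n
    · have h2 : gs (n+1+1) = Φ (gs (n+1)) := Function.iterate_succ_apply' Φ (n+1) 0
      rw [hF, ← h2]
      exact (hstab (n+1) J (by omega)).symm
    · have hcond : ¬ (J.Nonempty ∧ J ⊆ Λ) := by
        rintro ⟨-, hsub⟩; exact hJ (Finset.card_le_card hsub)
      have h1 : Φ F J = 0 := by rw [Φdef, if_neg hcond]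
      have h2 : F J = 0 := by
        have h3 : gs (n+1) = Φ (gs n) := Function.iterate_succ_apply' Φ n 0
        rw [hF, h3, Φdef, if_neg hcond]
      rw [h1, h2]
  have hmemF : ∀ J, F J ∈ S J := by
    have H : ∀ (m : ℕ) (J : Finset ι), J.card < m → F J ∈ S J := by
      intro m
      induction m with
      | zero => intro J hJ; omega
      | succ m ih =>
        intro J hJ
        rw [← hfix J, Φdef]
        by_cases h : J.Nonempty ∧ J ⊆ Λ
        · rw [if_pos h]
          refine Submodule.sub_mem _ (humem J) ?_
          refine cc_mem hhatmul hhat0 hS0 hhatvac (fun K => ?_) J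
          by_cases hK : K ⊂ J
          · rw [if_pos hK]
            exact ih K (lt_of_lt_of_le (Finset.card_lt_card hK) (by omega))
          · rw [if_neg hK]; exact Submodule.zero_mem _
        · rw [if_neg h]; exact Submodule.zero_mem _
    exact fun J => H (J.card + 1) J (by omega)
  have hzeroF : ∀ I, ¬(I.Nonempty ∧ I ⊆ Λ) → F I = 0 := by
    intro I h
    rw [← hfix I, Φdef, if_neg h]
  have hccu : ∀ I ∈ Λ.powerset, cc Λ Ω hat F I = u I := by
    intro I hIp
    rcases Finset.eq_empty_or_nonempty I with rfl | hIne
    · rw [cc_empty, hu0]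
    · have hIΛ := Finset.mem_powerset.1 hIp
      have htrmem : ∀ K : Finset ι, (if K ⊂ I then F K else 0) ∈ S K := fun K => by
        by_cases hK : K ⊂ I
        · rw [if_pos hK]; exact hmemF K
        · rw [if_neg hK]; exact Submodule.zero_mem _
      have hdiff := cc_diff hhatmul hhat0 hhatvac F
        (fun J => if J ⊂ I then F J else 0) hmemF htrmem hIne hIΛ
        (fun J hJ => (if_pos hJ).symm)
      rw [show (if I ⊂ I then F I else 0) = 0 from if_neg (lt_irrefl I)] at hdiff
      have hfe : F I = u I - cc Λ Ω hat (fun J => if J ⊂ I then F J else 0) I := by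
        conv_lhs => rw [← hfix I]
        rw [Φdef, if_pos ⟨hIne, hIΛ⟩]
      have h5 : cc Λ Ω hat F I
          = F I - 0 + cc Λ Ω hat (fun J => if J ⊂ I then F J else 0) I :=
        sub_eq_iff_eq_add.1 hdiff
      rw [h5, hfe]
      abel
  refine ⟨F, ⟨hmemF, hzeroF, ?_⟩, ?_⟩
  · rw [sum_cc, Finset.sum_congr rfl hccu, husum]
  · rintro f' ⟨hm', hz', hE'⟩
    have hccu' : ∀ I ∈ Λ.powerset, cc Λ Ω hat f' I = u I := by
      refine orth_eq horth (fun I _ => cc_mem hhatmul hhat0 hS0 hhatvac hm' I)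
        (fun I _ => humem I) ?_
      rw [← sum_cc, hE', husum]
    have H : ∀ (m : ℕ) (J : Finset ι), J.card < m → f' J = F J := by
      intro m
      induction m with
      | zero => intro J hJ; omega
      | succ m ih =>
        intro J hJ
        by_cases h : J.Nonempty ∧ J ⊆ Λ
        · have hdiff := cc_diff hhatmul hhat0 hhatvac f' F hm' hmemF h.1 h.2
            (fun K hK => ih K (lt_of_lt_of_le (Finset.card_lt_card hK) (by omega)))
          have hJp : J ∈ Λ.powerset := Finset.mem_powerset.2 h.2
          rw [hccu' J hJp, hccu J hJp, sub_self] at hdiff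
          exact sub_eq_zero.1 hdiff.symm
        · rw [hz' J h, hzeroF J h]
    funext J
    exact H (J.card + 1) J (by omega)
end

section
/- Let P be an orthogonal projection onto a subspace 𝓖 of a Hilbert space, and suppose there are 'relevant' unit vectors (e_x)_{x∈X} and a family of 'irrelevant' vectors such that: (i) the relevant and irrelevant vectors together are total in the ambient space, and (ii) for each irrelevant vector u, Pu can be written as a (possibly infinite, absolutely convergent) linear combination of relevant vectors and irrelevant vectors with total norm at most ‖u‖/2. Then the vectors {P e_x : x ∈ X} are total in 𝓖. -/
open scoped InnerProductSpace

private lemma tsum_mem_closed' {𝓗 : Type*} [NormedAddCommGroup 𝓗]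
    [InnerProductSpace ℂ 𝓗] {ι : Type*} (S : Submodule ℂ 𝓗)
    (hS : IsClosed (S : Set 𝓗)) (f : ι → 𝓗) (hf : ∀ i, f i ∈ S) :
    (∑' i, f i) ∈ S := by
  by_cases h : Summable f
  · have := h.hasSum
    exact hS.mem_of_tendsto this
      (Filter.Eventually.of_forall fun s => sum_mem fun i _ => hf i)
  · simpa [tsum_eq_zero_of_not_summable h] using S.zero_mem

/-- totality of projected relevant vectors.  Let `P` be an
orthogonal projection, `(e_x)_{x∈X}` 'relevant' unit vectors and `irr` a set of
'irrelevant' vectors which together are total in the ambient space.  If the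
projection of each irrelevant vector `u` expands as an absolutely convergent
combination of relevant vectors plus irrelevant vectors of total norm at most
`‖u‖/2`, then `{P e_x}` is total in the range of `P`. -/
theorem stmt15
    {𝓗 : Type*} [NormedAddCommGroup 𝓗] [InnerProductSpace ℂ 𝓗] [CompleteSpace 𝓗]
    {X : Type*} [Countable X]
    (P : 𝓗 →L[ℂ] 𝓗) (hPproj : P ∘L P = P)
    (hPsa : ∀ v w : 𝓗, ⟪P v, w⟫_ℂ = ⟪v, P w⟫_ℂ)
    (e : X → 𝓗) (he : ∀ x, ‖e x‖ = 1)
    (irr : Set 𝓗)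
    (htotal : (Submodule.span ℂ (Set.range e ∪ irr)).topologicalClosure = ⊤)
    (hexp : ∀ u ∈ irr, ∃ (a : X → ℂ) (b : ℕ → ℂ) (g : ℕ → 𝓗),
      (∀ n, g n ∈ irr) ∧
      Summable (fun x => ‖a x‖) ∧
      Summable (fun n => ‖b n‖ * ‖g n‖) ∧
      (∑' n, ‖b n‖ * ‖g n‖) ≤ ‖u‖ / 2 ∧
      P u = (∑' x, a x • e x) + ∑' n, b n • g n) :
    (Submodule.span ℂ (Set.range fun x => P (e x))).topologicalClosure =
      LinearMap.range (P : 𝓗 →ₗ[ℂ] 𝓗) := by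
  set S := (Submodule.span ℂ (Set.range fun x => P (e x))).topologicalClosure with hS
  have hSclosed : IsClosed (S : Set 𝓗) := Submodule.isClosed_topologicalClosure _
  have hSne : (S : Set 𝓗).Nonempty := ⟨0, S.zero_mem⟩
  have hPe : ∀ x, P (e x) ∈ S := fun x =>
    Submodule.le_topologicalClosure _ (Submodule.subset_span ⟨x, rfl⟩)
  have hPP : ∀ v, P (P v) = P v := fun v => by
    have := ContinuousLinearMap.ext_iff.mp hPproj v
    simpa using this
  -- key recursive estimate
  have key : ∀ c : ℝ, 0 ≤ c → (∀ u ∈ irr, Metric.infDist (P u) S ≤ c * ‖u‖) →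
      ∀ u ∈ irr, Metric.infDist (P u) S ≤ c / 2 * ‖u‖ := by
    intro c hc h u hu
    obtain ⟨a, b, g, hg, hsa, hsb, hbound, hPu⟩ := hexp u hu
    have hsum1 : Summable fun x => a x • e x := by
      apply Summable.of_norm
      simpa [norm_smul, he] using hsa
    have hsum2 : Summable fun n => b n • g n := by
      apply Summable.of_norm
      simpa [norm_smul] using hsb
    have hPu2 : P u = (∑' x, a x • P (e x)) + ∑' n, b n • P (g n) := by
      conv_lhs => rw [← hPP u, hPu]
      rw [map_add, P.map_tsum hsum1, P.map_tsum hsum2]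
      simp only [map_smul]
    have hsumPg : Summable fun n => b n • P (g n) := by
      apply Summable.of_norm
      apply Summable.of_nonneg_of_le (fun n => norm_nonneg _)
        (fun n => ?_) (hsb.mul_left ‖P‖)
      rw [norm_smul]
      calc ‖b n‖ * ‖P (g n)‖ ≤ ‖b n‖ * (‖P‖ * ‖g n‖) := by
            exact mul_le_mul_of_nonneg_left (P.le_opNorm _) (norm_nonneg _)
        _ = ‖P‖ * (‖b n‖ * ‖g n‖) := by ring
    -- ε-argument
    have hε : ∀ ε : ℝ, 0 < ε → Metric.infDist (P u) S ≤ c / 2 * ‖u‖ + 2 * ε := by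
      intro ε hεpos
      have hchoice : ∀ n, ∃ z ∈ S,
          ‖P (g n) - z‖ ≤ c * ‖g n‖ + ε * (1 / 2) ^ n / (‖b n‖ + 1) := by
        intro n
        have h1 : Metric.infDist (P (g n)) S ≤ c * ‖g n‖ := h (g n) (hg n)
        have h2 : 0 < ε * (1 / 2 : ℝ) ^ n / (‖b n‖ + 1) := by positivity
        have h3 : Metric.infDist (P (g n)) S <
            c * ‖g n‖ + ε * (1 / 2) ^ n / (‖b n‖ + 1) :=
          lt_of_le_of_lt h1 (lt_add_of_pos_right _ h2)
        obtain ⟨z, hzS, hz⟩ := (Metric.infDist_lt_iff hSne).mp h3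
        exact ⟨z, hzS, by rw [← dist_eq_norm]; exact hz.le⟩
      choose s hsS hsnorm using hchoice
      set t : ℕ → 𝓗 := fun n => b n • (P (g n) - s n) with ht
      have htle : ∀ n, ‖t n‖ ≤ c * (‖b n‖ * ‖g n‖) + ε * (1 / 2) ^ n := by
        intro n
        rw [ht, norm_smul]
        have h1 : ‖b n‖ * ‖P (g n) - s n‖ ≤
            ‖b n‖ * (c * ‖g n‖ + ε * (1 / 2) ^ n / (‖b n‖ + 1)) :=
          mul_le_mul_of_nonneg_left (hsnorm n) (norm_nonneg _)
        have h2 : ‖b n‖ * (ε * (1 / 2) ^ n / (‖b n‖ + 1)) ≤ ε * (1 / 2) ^ n := by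
          have hbp : (0:ℝ) < ‖b n‖ + 1 := by positivity
          have hq : ‖b n‖ / (‖b n‖ + 1) ≤ 1 := by
            rw [div_le_one hbp]; linarith [norm_nonneg (b n)]
          calc ‖b n‖ * (ε * (1 / 2) ^ n / (‖b n‖ + 1))
              = ε * (1 / 2) ^ n * (‖b n‖ / (‖b n‖ + 1)) := by ring
            _ ≤ ε * (1 / 2) ^ n * 1 :=
                mul_le_mul_of_nonneg_left hq (by positivity)
            _ = ε * (1 / 2) ^ n := mul_one _
        nlinarith [norm_nonneg (b n), norm_nonneg (g n)]
      have hsumgeo : Summable fun n : ℕ => ε * (1 / 2 : ℝ) ^ n :=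
        (summable_geometric_of_lt_one (by norm_num) (by norm_num)).mul_left ε
      have hsumbd : Summable fun n => c * (‖b n‖ * ‖g n‖) + ε * (1 / 2 : ℝ) ^ n :=
        (hsb.mul_left c).add hsumgeo
      have hsumtn : Summable fun n => ‖t n‖ :=
        Summable.of_nonneg_of_le (fun n => norm_nonneg _) htle hsumbd
      have hsumt : Summable t := Summable.of_norm hsumtn
      have hsumbs : Summable fun n => b n • s n := by
        have heq : (fun n => b n • s n) = fun n => b n • P (g n) - t n := by
          funext n; rw [ht]; simp [smul_sub]
        rw [heq]; exact hsumPg.sub hsumt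
      set s0 : 𝓗 := (∑' x, a x • P (e x)) + ∑' n, b n • s n with hs0
      have hs0S : s0 ∈ S := by
        apply S.add_mem
        · exact tsum_mem_closed' S hSclosed _ fun x => S.smul_mem _ (hPe x)
        · exact tsum_mem_closed' S hSclosed _ fun n => S.smul_mem _ (hsS n)
      have hdiff : P u - s0 = ∑' n, t n := by
        rw [hPu2, hs0]
        rw [add_sub_add_left_eq_sub, ← Summable.tsum_sub hsumPg hsumbs]
        exact tsum_congr fun n => by simp [ht, smul_sub]
      have hnorm : ‖P u - s0‖ ≤ c / 2 * ‖u‖ + 2 * ε := by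
        rw [hdiff]
        calc ‖∑' n, t n‖ ≤ ∑' n, ‖t n‖ := norm_tsum_le_tsum_norm hsumtn
          _ ≤ ∑' n, (c * (‖b n‖ * ‖g n‖) + ε * (1 / 2) ^ n) :=
              Summable.tsum_le_tsum htle hsumtn hsumbd
          _ = c * (∑' n, ‖b n‖ * ‖g n‖) + ε * ∑' n : ℕ, ((1:ℝ) / 2) ^ n := by
              rw [Summable.tsum_add (hsb.mul_left c) hsumgeo, tsum_mul_left, tsum_mul_left]
          _ = c * (∑' n, ‖b n‖ * ‖g n‖) + 2 * ε := by rw [tsum_geometric_two]; ring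
          _ ≤ c * (‖u‖ / 2) + 2 * ε := by
              have := mul_le_mul_of_nonneg_left hbound hc
              linarith
          _ = c / 2 * ‖u‖ + 2 * ε := by ring
      calc Metric.infDist (P u) S ≤ dist (P u) s0 :=
            Metric.infDist_le_dist_of_mem hs0S
        _ = ‖P u - s0‖ := dist_eq_norm _ _
        _ ≤ c / 2 * ‖u‖ + 2 * ε := hnorm
    apply le_of_forall_pos_le_add
    intro ε hεpos
    have := hε (ε / 2) (by linarith)
    linarith
  -- iterate
  have iter : ∀ k : ℕ, ∀ u ∈ irr, Metric.infDist (P u) S ≤ ‖P‖ / 2 ^ k * ‖u‖ := by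
    intro k
    induction k with
    | zero =>
      intro u hu
      have : Metric.infDist (P u) S ≤ ‖P u‖ := by
        calc Metric.infDist (P u) S ≤ dist (P u) 0 :=
              Metric.infDist_le_dist_of_mem (S.zero_mem)
          _ = ‖P u‖ := by simp
      simpa using this.trans (P.le_opNorm u)
    | succ k ih =>
      have := key (‖P‖ / 2 ^ k) (by positivity) ih
      intro u hu
      have h2 : ‖P‖ / 2 ^ k / 2 = ‖P‖ / 2 ^ (k + 1) := by
        rw [div_div, pow_succ]
      rw [← h2]
      exact this u hu
  -- conclude P u ∈ S for irrelevant u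
  have hPirr : ∀ u ∈ irr, P u ∈ S := by
    intro u hu
    have hzero : Metric.infDist (P u) S = 0 := by
      apply le_antisymm _ Metric.infDist_nonneg
      have htend : Filter.Tendsto (fun k : ℕ => ‖P‖ / 2 ^ k * ‖u‖)
          Filter.atTop (nhds 0) := by
        have : Filter.Tendsto (fun k : ℕ => ((1:ℝ)/2) ^ k) Filter.atTop (nhds 0) :=
          tendsto_pow_atTop_nhds_zero_of_lt_one (by norm_num) (by norm_num)
        have := (this.const_mul ‖P‖).mul_const ‖u‖
        simpa [div_eq_mul_inv, mul_comm, mul_assoc, mul_left_comm, inv_pow] using this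
      exact ge_of_tendsto' htend fun k => iter k u hu
    exact (hSclosed.mem_iff_infDist_zero hSne).mpr hzero
  -- range P is closed
  have hrangeker : LinearMap.range (P : 𝓗 →ₗ[ℂ] 𝓗) =
      LinearMap.ker ((ContinuousLinearMap.id ℂ 𝓗 - P : 𝓗 →L[ℂ] 𝓗) : 𝓗 →ₗ[ℂ] 𝓗) := by
    ext v
    simp only [LinearMap.mem_range, LinearMap.mem_ker]
    constructor
    · rintro ⟨w, rfl⟩
      simp [ContinuousLinearMap.sub_apply, hPP w]
    · intro hv
      refine ⟨v, ?_⟩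
      have : v - P v = 0 := by simpa [ContinuousLinearMap.sub_apply] using hv
      exact (sub_eq_zero.mp this).symm
  have hrclosed : IsClosed ((LinearMap.range (P : 𝓗 →ₗ[ℂ] 𝓗) : Submodule ℂ 𝓗) : Set 𝓗) := by
    rw [hrangeker]
    exact ContinuousLinearMap.isClosed_ker (ContinuousLinearMap.id ℂ 𝓗 - P)
  apply le_antisymm
  · refine Submodule.topologicalClosure_minimal _ (Submodule.span_le.mpr ?_) hrclosed
    rintro _ ⟨x, rfl⟩
    exact ⟨e x, rfl⟩
  · rintro _ ⟨w, rfl⟩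
    have hcomap_closed : IsClosed ((S.comap (P : 𝓗 →ₗ[ℂ] 𝓗)) : Set 𝓗) := by
      show IsClosed (⇑P ⁻¹' S)
      exact hSclosed.preimage P.continuous
    have hle : Submodule.span ℂ (Set.range e ∪ irr) ≤ S.comap (P : 𝓗 →ₗ[ℂ] 𝓗) := by
      apply Submodule.span_le.mpr
      rintro v (⟨x, rfl⟩ | hv)
      · exact hPe x
      · exact hPirr v hv
    have := Submodule.topologicalClosure_minimal _ hle hcomap_closed
    rw [htotal] at this
    exact this Submodule.mem_top
end
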